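/- arXiv:2104.12412 — 4 statements merged into one kernel-verified Lean document; each statement's English description precedes it below -/
import Mathlib

section
/- For every natural number n, (1/4)_n · (1/2)_n · (3/4)_n = (4n)! / (4^{4n} · n!), where (a)_n denotes the Pochhammer symbol (rising factorial). -/
/-!
Multiplying the `k` Pochhammer symbols `((j + 1) / k)_n`, `j < k`, by `k ^ (k n)` interleaves their
factors `(j + 1) + k i` into the product `1 · 2 ⋯ (k n) = (k n)!`. For `k = 4` the last symbol is
`(1)_n = n!`, and the remaining three are `(1/4)_n`, `(1/2)_n`, `(3/4)_n`.
-/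

open Finset Nat Polynomial

theorem Nat.factorial_add_eq_factorial_mul_prod_range (m k : ℕ) :
    (m + k)! = m ! * ∏ j ∈ range k, (m + j + 1) := by
  rw [← factorial_mul_ascFactorial, ascFactorial_eq_prod_range]
  congr 1
  exact prod_congr rfl fun j _ => by ring

theorem factorial_mul_eq_pow_mul_prod_ascPochhammer_eval (k n : ℕ) :
    ((k * n)! : ℝ) =
      (k : ℝ) ^ (k * n) * ∏ j ∈ range k, (ascPochhammer ℝ n).eval (((j : ℝ) + 1) / k) := by
  rcases Nat.eq_zero_or_pos k with rfl | hk
  · simp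
  have hk' : (k : ℝ) ≠ 0 := by positivity
  induction n with
  | zero => simp
  | succ n ih =>
    have hfactors : ∏ j ∈ range k, ((k * n + j + 1 : ℕ) : ℝ) =
        (k : ℝ) ^ k * ∏ j ∈ range k, ((((j : ℝ) + 1) / k) + n) := by
      rw [← card_range k, ← prod_const, card_range, ← prod_mul_distrib]
      exact prod_congr rfl fun j _ => by push_cast; field_simp; ring
    rw [mul_add_one, factorial_add_eq_factorial_mul_prod_range, cast_mul, ih, cast_prod, hfactors]
    simp only [ascPochhammer_succ_eval, prod_mul_distrib]
    ring

theorem pochhammer_quarter_half_three_quarter (n : ℕ) :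
    (ascPochhammer ℝ n).eval (1/4) * (ascPochhammer ℝ n).eval (1/2) *
      (ascPochhammer ℝ n).eval (3/4) =
    (Nat.factorial (4*n) : ℝ) / (4^(4*n) * (Nat.factorial n : ℝ)) := by
  have h := factorial_mul_eq_pow_mul_prod_ascPochhammer_eval 4 n
  simp only [prod_range_succ, prod_range_zero] at h
  norm_num [ascPochhammer_eval_one] at h
  rw [h]
  field_simp
end

section
/- For every natural number n, (1/6)_n · (1/2)_n · (5/6)_n = (6n)! / (12^{3n} · (3n)!), where (a)_n denotes the Pochhammer symbol. -/
theorem pochhammer_sixth_half_five_sixth (n : ℕ) :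
    (ascPochhammer ℝ n).eval (1/6) * (ascPochhammer ℝ n).eval (1/2) *
      (ascPochhammer ℝ n).eval (5/6) =
    (Nat.factorial (6*n) : ℝ) / (12^(3*n) * (Nat.factorial (3*n) : ℝ)) := by
  induction n with
  | zero => simp
  | succ n ih =>
    have h6 : 6 * (n + 1) = (6 * n + 5) + 1 := by ring
    have h3 : 3 * (n + 1) = (3 * n + 2) + 1 := by ring
    rw [ascPochhammer_succ_right]
    simp only [Polynomial.eval_mul, Polynomial.eval_add, Polynomial.eval_X,
      Polynomial.eval_natCast, h6, h3, Nat.factorial_succ, pow_succ]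
    have hfac3 : (0:ℝ) < (Nat.factorial (3*n) : ℝ) := by positivity
    have hpow : (0:ℝ) < (12:ℝ)^(3*n) := by positivity
    push_cast
    have key : ∀ A B C a b c : ℝ, A * a * (B * b) * (C * c) =
        A * B * C * (a * b * c) := by intros; ring
    rw [key, ih]
    field_simp
    ring
end

section
/- Let g₅₈ > 0 satisfy g₅₈² = (5 + √29)/2. Then g₅₈¹² + g₅₈⁻¹² = 19602, and hence x₅₈ := 2/(g₅₈¹² + g₅₈⁻¹²) = 1/9801. -/
theorem x58 (g : ℝ) (hg : 0 < g) (hg2 : g^2 = (5 + Real.sqrt 29)/2) :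
    g^12 + (g^12)⁻¹ = 19602 ∧ 2/(g^12 + (g^12)⁻¹) = 1/9801 := by
  set s := Real.sqrt 29 with hs_def
  have hs : s ^ 2 = 29 := Real.sq_sqrt (by norm_num)
  have hs0 : 0 ≤ s := Real.sqrt_nonneg 29
  have h12 : g ^ 12 = ((5 + s) / 2) ^ 6 := by
    rw [show (12 : ℕ) = 2 * 6 from rfl, pow_mul, hg2]
  have hmul : ((5 + s) / 2) ^ 6 * ((s - 5) / 2) ^ 6 = 1 := by
    rw [← mul_pow]
    have : (5 + s) / 2 * ((s - 5) / 2) = 1 := by nlinarith [hs]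
    rw [this, one_pow]
  have hinv : (g ^ 12)⁻¹ = ((s - 5) / 2) ^ 6 := by
    rw [h12]
    exact inv_eq_of_mul_eq_one_right hmul
  have key : g ^ 12 + (g ^ 12)⁻¹ = 19602 := by
    have h4 : s ^ 4 = 841 := by
      rw [show (4 : ℕ) = 2 * 2 from rfl, pow_mul, hs]; norm_num
    have h6 : s ^ 6 = 24389 := by
      rw [show (6 : ℕ) = 2 * 3 from rfl, pow_mul, hs]; norm_num
    rw [hinv, h12]
    ring_nf
    linarith [hs, h4, h6]
  exact ⟨key, by rw [key]; norm_num⟩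
end

section
/- For all k ∈ (0,1), the complete elliptic integrals satisfy Legendre's relation K(k)·E(k') + E(k)·K(k') − K(k)·K(k') = π/2, where k' = √(1-k²). -/
open Real

noncomputable def ellipticK (k : ℝ) : ℝ :=
  ∫ θ in (0:ℝ)..(π/2), 1 / Real.sqrt (1 - k^2 * Real.sin θ ^ 2)

noncomputable def ellipticE (k : ℝ) : ℝ :=
  ∫ θ in (0:ℝ)..(π/2), Real.sqrt (1 - k^2 * Real.sin θ ^ 2)

/-!
With `m = k²`, both `K` and `E` are values of `I_p(m) = ∫₀^{π/2} (1 - m sin²θ)^p`, at `p = -1/2`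
and `p = 1/2`. Differentiating under the integral sign and using `m sin²θ = 1 - (1 - m sin²θ)`
gives `m I_p' = p (I_p - I_{p-1})`. Integrating the `θ`-derivative of
`sin θ cos θ (1 - m sin²θ)^p` over `[0, π/2]` gives a three-term recurrence, which at `p = -1/2`
reads `(1 - m) I_{-3/2} = I_{1/2}`. Hence `K'` and `E'` are expressed through `K` and `E`, and the
Legendre combination `K(m) E(1-m) + E(m) K(1-m) - K(m) K(1-m)` has derivative zero on `(0, 1)`.
Its constant value is its limit as `m → 0⁺`: there `K(m) → π/2`, `E(1-m) → 1`, and the remaining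
term `(E(m) - K(m)) K(1-m)` is `O(m) · O(m^{-1/2})`.
-/

open Set Filter Topology Asymptotics intervalIntegral

lemma one_sub_mul_sin_sq_mem_uIcc (m θ : ℝ) : 1 - m * sin θ ^ 2 ∈ uIcc 1 (1 - m) := by
  have h0 := sq_nonneg (sin θ)
  have h1 := sin_sq_le_one θ
  rcases le_total 0 m with hm | hm
  · exact mem_uIcc.2 (Or.inr ⟨by nlinarith, by nlinarith⟩)
  · exact mem_uIcc.2 (Or.inl ⟨by nlinarith, by nlinarith⟩)

lemma one_sub_mul_sin_sq_pos {m : ℝ} (hm : m < 1) (θ : ℝ) : 0 < 1 - m * sin θ ^ 2 :=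
  lt_of_lt_of_le (lt_min one_pos (sub_pos.2 hm)) (one_sub_mul_sin_sq_mem_uIcc m θ).1

lemma continuous_one_sub_mul_sin_sq_rpow {m : ℝ} (hm : m < 1) (q : ℝ) :
    Continuous fun θ => (1 - m * sin θ ^ 2) ^ q :=
  (by fun_prop : Continuous fun θ => 1 - m * sin θ ^ 2).rpow_const
    fun θ => Or.inl (one_sub_mul_sin_sq_pos hm θ).ne'

lemma intervalIntegrable_one_sub_mul_sin_sq_rpow {m : ℝ} (hm : m < 1) (q : ℝ) :
    IntervalIntegrable (fun θ => (1 - m * sin θ ^ 2) ^ q) MeasureTheory.volume 0 (π/2) :=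
  (continuous_one_sub_mul_sin_sq_rpow hm q).intervalIntegrable _ _

noncomputable def ellipticPowIntegral (p m : ℝ) : ℝ :=
  ∫ θ in (0:ℝ)..π/2, (1 - m * sin θ ^ 2) ^ p

lemma ellipticK_eq_ellipticPowIntegral {k : ℝ} (hk : k ^ 2 ≤ 1) :
    ellipticK k = ellipticPowIntegral (-1/2) (k ^ 2) := by
  refine integral_congr fun θ _ => ?_
  have h : 0 ≤ 1 - k ^ 2 * sin θ ^ 2 := by nlinarith [sin_sq_le_one θ, sq_nonneg (sin θ)]
  rw [sqrt_eq_rpow, one_div, ← rpow_neg h]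
  norm_num

lemma ellipticE_eq_ellipticPowIntegral (k : ℝ) :
    ellipticE k = ellipticPowIntegral (1/2) (k ^ 2) :=
  integral_congr fun _ _ => sqrt_eq_rpow _

lemma ellipticPowIntegral_zero (p : ℝ) : ellipticPowIntegral p 0 = π / 2 := by
  simp [ellipticPowIntegral]

lemma ellipticPowIntegral_half_one : ellipticPowIntegral (1/2) 1 = 1 := by
  have h : ∀ θ ∈ uIcc 0 (π/2), (1 - 1 * sin θ ^ 2) ^ (1/2 : ℝ) = cos θ := fun θ hθ => by
    rw [uIcc_of_le (by positivity)] at hθ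
    rw [one_mul, ← cos_sq', ← sqrt_eq_rpow,
      sqrt_sq (cos_nonneg_of_mem_Icc ⟨by linarith [hθ.1, pi_pos], hθ.2⟩)]
  rw [ellipticPowIntegral, integral_congr h, integral_cos]
  simp

lemma hasDerivAt_one_sub_mul_rpow {m s : ℝ} (p : ℝ) (hm : 0 < 1 - m * s) :
    HasDerivAt (fun x => (1 - x * s) ^ p) (-p * s * (1 - m * s) ^ (p - 1)) m := by
  convert ((hasDerivAt_id' m).mul_const s).const_sub 1 |>.rpow_const (p := p) (Or.inl hm.ne')
    using 1
  ring

lemma hasDerivAt_ellipticPowIntegral (p : ℝ) {m : ℝ} (hm : m < 1) :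
    HasDerivAt (ellipticPowIntegral p)
      (∫ θ in (0:ℝ)..π/2, -p * sin θ ^ 2 * (1 - m * sin θ ^ 2) ^ (p - 1)) m := by
  -- For `x ∈ s`, `1 - x sin²θ` stays in a compact subinterval of `(0, ∞)`, on which
  -- `t ↦ t ^ (p - 1)` is bounded.
  set s : Set ℝ := Ioo (m - 1) ((1 + m) / 2)
  set a : ℝ := min 1 ((1 - m) / 2)
  have ha : 0 < a := lt_min one_pos (by linarith)
  have hΔ : ∀ x ∈ s, ∀ θ, 1 - x * sin θ ^ 2 ∈ Icc a (2 - m) := by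
    intro x hx θ
    have h := mem_uIcc.1 (one_sub_mul_sin_sq_mem_uIcc x θ)
    have := min_le_left 1 ((1 - m) / 2)
    have := min_le_right 1 ((1 - m) / 2)
    constructor <;> rcases h with h | h <;> linarith [hx.1, hx.2, h.1, h.2]
  obtain ⟨C, hC⟩ := isCompact_Icc.exists_bound_of_continuousOn
    ((continuousOn_id.rpow_const (p := p - 1)) fun x hx => Or.inl
      (ne_of_gt (lt_of_lt_of_le ha hx.1)) :
        ContinuousOn (fun x : ℝ => x ^ (p - 1)) (Icc a (2 - m)))
  refine (hasDerivAt_integral_of_dominated_loc_of_deriv_le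
    (F := fun x θ => (1 - x * sin θ ^ 2) ^ p)
    (F' := fun x θ => -p * sin θ ^ 2 * (1 - x * sin θ ^ 2) ^ (p - 1))
    (bound := fun _ => |p| * C) (Ioo_mem_nhds (by linarith) (by linarith) : s ∈ 𝓝 m)
    (Eventually.of_forall fun x => ?_) ?_ ?_ ?_ intervalIntegrable_const ?_).2
  · exact Measurable.aestronglyMeasurable (by fun_prop)
  · exact intervalIntegrable_one_sub_mul_sin_sq_rpow hm p
  · exact (continuous_const.mul (continuous_sin.pow 2) |>.mul
      (continuous_one_sub_mul_sin_sq_rpow hm (p - 1))).aestronglyMeasurable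
  · refine MeasureTheory.ae_of_all _ fun θ _ x hx => ?_
    rw [norm_mul, norm_mul, norm_neg, norm_pow, norm_eq_abs p]
    have hs : ‖sin θ‖ ^ 2 ≤ 1 := by rw [norm_eq_abs, sq_abs]; exact sin_sq_le_one θ
    have hC' := hC _ (hΔ x hx θ)
    have hC0 : 0 ≤ C := (norm_nonneg _).trans hC'
    calc |p| * ‖sin θ‖ ^ 2 * ‖(1 - x * sin θ ^ 2) ^ (p - 1)‖ ≤ |p| * 1 * C := by
          gcongr; exact hC'
      _ = |p| * C := by ring
  · exact MeasureTheory.ae_of_all _ fun θ _ x hx =>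
      hasDerivAt_one_sub_mul_rpow p (lt_of_lt_of_le ha (hΔ x hx θ).1)

lemma hasDerivAt_ellipticPowIntegral_of_ne_zero (p : ℝ) {m : ℝ} (hm : m < 1) (hm0 : m ≠ 0) :
    HasDerivAt (ellipticPowIntegral p)
      (p * (ellipticPowIntegral p m - ellipticPowIntegral (p - 1) m) / m) m := by
  convert hasDerivAt_ellipticPowIntegral p hm using 1
  have h : ∀ θ ∈ uIcc 0 (π/2), -p * sin θ ^ 2 * (1 - m * sin θ ^ 2) ^ (p - 1) =
      p / m * ((1 - m * sin θ ^ 2) ^ p - (1 - m * sin θ ^ 2) ^ (p - 1)) := fun θ _ => by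
    have hΔ := (one_sub_mul_sin_sq_pos hm θ).ne'
    have e : (1 - m * sin θ ^ 2) ^ p = (1 - m * sin θ ^ 2) ^ (p - 1) * (1 - m * sin θ ^ 2) := by
      rw [← rpow_add_one hΔ, sub_add_cancel]
    rw [e]
    field_simp
    ring
  rw [integral_congr h, integral_const_mul, integral_sub
    (intervalIntegrable_one_sub_mul_sin_sq_rpow hm p)
    (intervalIntegrable_one_sub_mul_sin_sq_rpow hm (p - 1))]
  rw [ellipticPowIntegral, ellipticPowIntegral]
  ring

lemma ellipticPowIntegral_recurrence (p : ℝ) {m : ℝ} (hm : m < 1) :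
    2 * (p + 1) * ellipticPowIntegral (p + 1) m + (1 + 2 * p) * (m - 2) * ellipticPowIntegral p m
      + 2 * p * (1 - m) * ellipticPowIntegral (p - 1) m = 0 := by
  set f' : ℝ → ℝ := fun θ => (cos θ ^ 2 - sin θ ^ 2) * (1 - m * sin θ ^ 2) ^ p
    + sin θ * cos θ * (-(m * (2 * sin θ * cos θ)) * p * (1 - m * sin θ ^ 2) ^ (p - 1))
  have hderiv : ∀ θ, HasDerivAt (fun θ => sin θ * cos θ * (1 - m * sin θ ^ 2) ^ p) (f' θ) θ :=
    fun θ => by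
    have hsc : HasDerivAt (fun θ => sin θ * cos θ) (cos θ ^ 2 - sin θ ^ 2) θ :=
      ((hasDerivAt_sin θ).mul (hasDerivAt_cos θ)).congr_deriv (by ring)
    have hΔ : HasDerivAt (fun θ => 1 - m * sin θ ^ 2) (-(m * (2 * sin θ * cos θ))) θ :=
      (((hasDerivAt_sin θ).pow 2).const_mul m |>.const_sub 1).congr_deriv (by simp)
    exact hsc.mul (hΔ.rpow_const (Or.inl (one_sub_mul_sin_sq_pos hm θ).ne'))
  have hf' : Continuous f' := by
    have := continuous_one_sub_mul_sin_sq_rpow hm p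
    have := continuous_one_sub_mul_sin_sq_rpow hm (p - 1)
    fun_prop
  have hvanish : ∫ θ in (0:ℝ)..π/2, m * f' θ = 0 := by
    rw [integral_const_mul, integral_eq_sub_of_hasDerivAt (fun θ _ => hderiv θ)
      (hf'.intervalIntegrable _ _)]
    simp
  have hpoint : ∀ θ ∈ uIcc 0 (π/2), m * f' θ = 2 * (p + 1) * (1 - m * sin θ ^ 2) ^ (p + 1)
      + (1 + 2 * p) * (m - 2) * (1 - m * sin θ ^ 2) ^ p
      + 2 * p * (1 - m) * (1 - m * sin θ ^ 2) ^ (p - 1) := fun θ _ => by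
    have hΔ := (one_sub_mul_sin_sq_pos hm θ).ne'
    have e : (1 - m * sin θ ^ 2) ^ p = (1 - m * sin θ ^ 2) ^ (p - 1) * (1 - m * sin θ ^ 2) := by
      rw [← rpow_add_one hΔ, sub_add_cancel]
    simp only [f', rpow_add_one hΔ, e]
    linear_combination (m * (1 - m * sin θ ^ 2) ^ (p - 1) * (1 - m * sin θ ^ 2)
      - 2 * m ^ 2 * p * sin θ ^ 2 * (1 - m * sin θ ^ 2) ^ (p - 1)) * sin_sq_add_cos_sq θ
  have hI := intervalIntegrable_one_sub_mul_sin_sq_rpow hm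
  rw [integral_congr hpoint, integral_add (((hI _).const_mul _).add ((hI _).const_mul _))
    ((hI _).const_mul _), integral_add ((hI _).const_mul _) ((hI _).const_mul _),
    integral_const_mul, integral_const_mul, integral_const_mul] at hvanish
  exact hvanish

lemma hasDerivAt_ellipticPowIntegral_neg_half {m : ℝ} (hm : m < 1) (hm0 : m ≠ 0) :
    HasDerivAt (ellipticPowIntegral (-1/2))
      ((ellipticPowIntegral (1/2) m / (1 - m) - ellipticPowIntegral (-1/2) m) / (2 * m)) m := by
  have hrec := ellipticPowIntegral_recurrence (-1/2) hm
  norm_num at hrec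
  have h1m : 1 - m ≠ 0 := by linarith
  refine (hasDerivAt_ellipticPowIntegral_of_ne_zero (-1/2) hm hm0).congr_deriv ?_
  norm_num
  field_simp
  linear_combination -hrec

lemma hasDerivAt_ellipticPowIntegral_half {m : ℝ} (hm : m < 1) (hm0 : m ≠ 0) :
    HasDerivAt (ellipticPowIntegral (1/2))
      ((ellipticPowIntegral (1/2) m - ellipticPowIntegral (-1/2) m) / (2 * m)) m := by
  refine (hasDerivAt_ellipticPowIntegral_of_ne_zero (1/2) hm hm0).congr_deriv ?_
  norm_num
  field_simp

noncomputable def legendreCombination (m : ℝ) : ℝ :=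
  ellipticPowIntegral (-1/2) m * ellipticPowIntegral (1/2) (1 - m)
    + ellipticPowIntegral (1/2) m * ellipticPowIntegral (-1/2) (1 - m)
    - ellipticPowIntegral (-1/2) m * ellipticPowIntegral (-1/2) (1 - m)

lemma hasDerivAt_legendreCombination {m : ℝ} (hm : m ∈ Ioo 0 1) :
    HasDerivAt legendreCombination 0 m := by
  obtain ⟨hm0, hm1⟩ := hm
  have h1m : 1 - m < 1 := by linarith
  have h1m0 : 1 - m ≠ 0 := by linarith
  have hK := hasDerivAt_ellipticPowIntegral_neg_half hm1 hm0.ne'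
  have hE := hasDerivAt_ellipticPowIntegral_half hm1 hm0.ne'
  have hK' := (hasDerivAt_ellipticPowIntegral_neg_half h1m h1m0).comp_const_sub 1 m
  have hE' := (hasDerivAt_ellipticPowIntegral_half h1m h1m0).comp_const_sub 1 m
  refine ((hK.mul hE').add (hE.mul hK') |>.sub (hK.mul hK')).congr_deriv ?_
  rw [sub_sub_cancel]
  field_simp
  ring

lemma continuous_ellipticPowIntegral {q : ℝ} (hq : 0 ≤ q) : Continuous (ellipticPowIntegral q) :=
  continuous_parametric_intervalIntegral_of_continuous' (f := fun m θ => (1 - m * sin θ ^ 2) ^ q)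
    ((continuous_rpow_const hq).comp
      (by fun_prop : Continuous fun x : ℝ × ℝ => 1 - x.1 * sin x.2 ^ 2)) _ _

lemma norm_ellipticPowIntegral_le {q m : ℝ} (hq : q ≤ 0) (hm0 : 0 ≤ m) (hm1 : m < 1) :
    ‖ellipticPowIntegral q m‖ ≤ π / 2 * (1 - m) ^ q := by
  have h := norm_integral_le_of_norm_le_const (a := 0) (b := π/2) (C := (1 - m) ^ q)
    (f := fun θ => (1 - m * sin θ ^ 2) ^ q) fun θ _ => by
      have hΔ := mem_uIcc.1 (one_sub_mul_sin_sq_mem_uIcc m θ)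
      have hΔ0 : 0 < 1 - m * sin θ ^ 2 := one_sub_mul_sin_sq_pos hm1 θ
      rw [norm_of_nonneg (rpow_nonneg hΔ0.le _)]
      exact rpow_le_rpow_of_nonpos (by linarith) (by rcases hΔ with h | h <;> linarith) hq
  rwa [sub_zero, abs_of_pos (by positivity), mul_comm] at h

lemma isBigO_ellipticPowIntegral_half_sub_neg_half :
    (fun m => ellipticPowIntegral (1/2) m - ellipticPowIntegral (-1/2) m) =O[𝓝 0] fun m => m := by
  have h := ((hasDerivAt_ellipticPowIntegral (1/2) one_pos).sub
    (hasDerivAt_ellipticPowIntegral (-1/2) one_pos)).isBigO_sub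
  simp only [Pi.sub_apply, ellipticPowIntegral_zero, sub_self, sub_zero] at h
  exact h

lemma isBigO_ellipticPowIntegral_neg_half_one_sub :
    (fun m => ellipticPowIntegral (-1/2) (1 - m)) =O[𝓝[>] 0] fun m => m ^ (-1/2 : ℝ) := by
  refine IsBigO.of_bound (π / 2) ?_
  filter_upwards [Ioo_mem_nhdsGT (one_pos : (0:ℝ) < 1)] with m hm
  have h := norm_ellipticPowIntegral_le (by norm_num : (-1/2 : ℝ) ≤ 0)
    (by linarith [hm.2] : 0 ≤ 1 - m) (by linarith [hm.1] : 1 - m < 1)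
  rw [sub_sub_cancel] at h
  exact h.trans (by gcongr; exact le_norm_self _)

lemma tendsto_legendreCombination_zero : Tendsto legendreCombination (𝓝[>] 0) (𝓝 (π / 2)) := by
  have hK : Tendsto (ellipticPowIntegral (-1/2)) (𝓝[>] 0) (𝓝 (π / 2)) := by
    rw [← ellipticPowIntegral_zero (-1/2)]
    exact (hasDerivAt_ellipticPowIntegral (-1/2) one_pos).continuousAt.tendsto.mono_left
      nhdsWithin_le_nhds
  have hE' : Tendsto (fun m => ellipticPowIntegral (1/2) (1 - m)) (𝓝[>] 0) (𝓝 1) := by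
    have h1m : Tendsto (fun m : ℝ => 1 - m) (𝓝[>] 0) (𝓝 1) := by
      simpa using ((continuous_sub_left (1:ℝ)).tendsto 0).mono_left nhdsWithin_le_nhds
    have h := ((continuous_ellipticPowIntegral (by norm_num : (0:ℝ) ≤ 1/2)).tendsto 1).comp h1m
    rwa [ellipticPowIntegral_half_one] at h
  have hsqrt : Tendsto (fun m : ℝ => m ^ (1/2 : ℝ)) (𝓝[>] 0) (𝓝 0) := by
    have h := ((continuous_rpow_const (by norm_num : (0:ℝ) ≤ 1/2)).tendsto 0).mono_left
      (nhdsWithin_le_nhds (s := Ioi 0))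
    rwa [zero_rpow (by norm_num)] at h
  have hrem : Tendsto (fun m => (ellipticPowIntegral (1/2) m - ellipticPowIntegral (-1/2) m) *
      ellipticPowIntegral (-1/2) (1 - m)) (𝓝[>] 0) (𝓝 0) := by
    refine ((isBigO_ellipticPowIntegral_half_sub_neg_half.mono nhdsWithin_le_nhds).mul
      isBigO_ellipticPowIntegral_neg_half_one_sub).trans_tendsto (hsqrt.congr' ?_)
    filter_upwards [self_mem_nhdsWithin] with m (hm : 0 < m)
    rw [← rpow_one_add' hm.le (by norm_num)]
    norm_num
  convert (hK.mul hE').add hrem using 2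
  · simp only [legendreCombination]; ring
  · ring

lemma legendreCombination_eq {m : ℝ} (hm : m ∈ Ioo 0 1) : legendreCombination m = π / 2 := by
  have hconst : ∀ x ∈ Ioo (0:ℝ) 1, legendreCombination x = legendreCombination m := fun x hx =>
    isOpen_Ioo.is_const_of_deriv_eq_zero isPreconnected_Ioo
      (fun y hy => (hasDerivAt_legendreCombination hy).differentiableAt.differentiableWithinAt)
      (fun y hy => (hasDerivAt_legendreCombination hy).deriv) hx hm
  refine tendsto_nhds_unique ?_ tendsto_legendreCombination_zero
  refine tendsto_const_nhds.congr' ?_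
  filter_upwards [Ioo_mem_nhdsGT (one_pos : (0:ℝ) < 1)] with x hx
  exact (hconst x hx).symm

theorem legendre_relation (k : ℝ) (hk : k ∈ Set.Ioo (0:ℝ) 1) :
    ellipticK k * ellipticE (Real.sqrt (1 - k^2)) +
      ellipticE k * ellipticK (Real.sqrt (1 - k^2)) -
      ellipticK k * ellipticK (Real.sqrt (1 - k^2)) = π/2 := by
  obtain ⟨hk0, hk1⟩ := hk
  have hm : k ^ 2 ∈ Ioo 0 1 := ⟨by positivity, by nlinarith⟩
  have hk' : sqrt (1 - k ^ 2) ^ 2 = 1 - k ^ 2 := sq_sqrt (by linarith [hm.2])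
  rw [ellipticK_eq_ellipticPowIntegral hm.2.le,
    ellipticK_eq_ellipticPowIntegral (by linarith [hk', hm.1]),
    ellipticE_eq_ellipticPowIntegral, ellipticE_eq_ellipticPowIntegral, hk']
  exact legendreCombination_eq hm
end
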